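/- Let π̄: ℝ^d → [ε, 1] (with ε > 0) and μ̄: ℝ^d → [0,1] be measurable candidate nuisance functions, φ̄ = 1{A=a}/π̄(X) · (Y − μ̄(X)) + μ̄(X), and h: ℝ^d → ℝ bounded measurable. Then the bias satisfies the Cauchy–Schwarz bound |E[φ̄ · h(X)] − E[μ_a(X) h(X)]| ≤ (sup_x |h(x)| / ε) · ‖π̄(X) − π_a(X)‖_{L²(P)} · ‖μ̄(X) − μ_a(X)‖_{L²(P)}. -/

import Mathlib

open MeasureTheory

private lemma bdd_integrable {Ω : Type*} [MeasurableSpace Ω] (P : Measure Ω)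
    [IsFiniteMeasure P] {f : Ω → ℝ} (hf : Measurable f) (C : ℝ) (hC : ∀ ω, |f ω| ≤ C) :
    Integrable f P := by
  refine Integrable.mono' (integrable_const C) hf.aestronglyMeasurable ?_
  filter_upwards with ω
  simpa using hC ω

/-- Cauchy–Schwarz bound on the bias of the influence-function
functional: |E[φ̄ h(X)] − E[μ_a(X) h(X)]|
  ≤ (sup_x |h x| / ε) ‖π̄(X) − π_a(X)‖_{L²(P)} ‖μ̄(X) − μ_a(X)‖_{L²(P)}. -/
theorem influence_function_bias_cauchy_schwarz
    {Ω : Type*} [MeasurableSpace Ω] (P : Measure Ω) [IsProbabilityMeasure P]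
    {d : ℕ} (X : Ω → (Fin d → ℝ)) (A : Ω → Bool) (Y : Ω → ℝ)
    (hX : Measurable X) (hA : Measurable A) (hY : Measurable Y)
    (hY01 : ∀ ω, Y ω ∈ Set.Icc (0 : ℝ) 1)
    (a : Bool)
    (piA mu : (Fin d → ℝ) → ℝ)
    (hpim : Measurable piA) (hmum : Measurable mu)
    (hpi01 : ∀ x, piA x ∈ Set.Icc (0 : ℝ) 1) (hmu01 : ∀ x, mu x ∈ Set.Icc (0 : ℝ) 1)
    -- π_a is a version of P(A = a | X):
    (hpi : ∀ g : (Fin d → ℝ) → ℝ, Measurable g → (∃ C, ∀ x, |g x| ≤ C) →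
      ∫ ω, (if A ω = a then g (X ω) else 0) ∂P = ∫ ω, piA (X ω) * g (X ω) ∂P)
    -- μ_a is a version of E[Y | X, A = a]:
    (hmu : ∀ g : (Fin d → ℝ) → ℝ, Measurable g → (∃ C, ∀ x, |g x| ≤ C) →
      ∫ ω, (if A ω = a then Y ω * g (X ω) else 0) ∂P
        = ∫ ω, (if A ω = a then mu (X ω) * g (X ω) else 0) ∂P)
    -- candidate nuisance functions:
    (ε : ℝ) (hε : 0 < ε)
    (pib mub : (Fin d → ℝ) → ℝ) (hpibm : Measurable pib) (hmubm : Measurable mub)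
    (hpib : ∀ x, pib x ∈ Set.Icc ε 1) (hmub : ∀ x, mub x ∈ Set.Icc (0 : ℝ) 1)
    -- bounded measurable h:
    (h : (Fin d → ℝ) → ℝ) (hhm : Measurable h) (hhb : ∃ C, ∀ x, |h x| ≤ C) :
    |(∫ ω, ((if A ω = a then (1 : ℝ) else 0) / pib (X ω) * (Y ω - mub (X ω)) + mub (X ω))
          * h (X ω) ∂P)
        - ∫ ω, mu (X ω) * h (X ω) ∂P|
      ≤ (⨆ x, |h x|) / ε
          * Real.sqrt (∫ ω, (pib (X ω) - piA (X ω)) ^ 2 ∂P)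
          * Real.sqrt (∫ ω, (mub (X ω) - mu (X ω)) ^ 2 ∂P) := by
  obtain ⟨C, hC⟩ := hhb
  set M := ⨆ x, |h x| with hM
  have hbdd : BddAbove (Set.range fun x => |h x|) := ⟨C, by rintro _ ⟨x, rfl⟩; exact hC x⟩
  have hhM : ∀ x, |h x| ≤ M := fun x => le_ciSup hbdd x
  have hM0 : 0 ≤ M := le_trans (abs_nonneg _) (hhM (fun _ => 0))
  have hMε : 0 ≤ M / ε := by positivity
  have hpibpos : ∀ x, 0 < pib x := fun x => lt_of_lt_of_le hε (hpib x).1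
  have hpibne : ∀ x, pib x ≠ 0 := fun x => (hpibpos x).ne'
  have hmudiff : ∀ x, |mu x - mub x| ≤ 1 := fun x => by
    have h1 := hmu01 x; have h2 := hmub x
    rw [abs_le]; constructor
    · linarith [h1.1, h2.2]
    · linarith [h1.2, h2.1]
  set g₁ : (Fin d → ℝ) → ℝ := fun x => h x / pib x with hg₁
  set g₂ : (Fin d → ℝ) → ℝ := fun x => (mu x - mub x) * g₁ x with hg₂
  have hg₁m : Measurable g₁ := hhm.div hpibm
  have hg₁b : ∀ x, |g₁ x| ≤ M / ε := fun x => by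
    rw [hg₁]
    simp only
    rw [abs_div, abs_of_pos (hpibpos x)]
    exact div_le_div₀ hM0 (hhM x) hε (hpib x).1
  have hg₂m : Measurable g₂ := (hmum.sub hmubm).mul hg₁m
  have hg₂b : ∀ x, |g₂ x| ≤ M / ε := fun x => by
    rw [hg₂]; simp only [abs_mul]
    calc |mu x - mub x| * |g₁ x| ≤ 1 * (M / ε) :=
          mul_le_mul (hmudiff x) (hg₁b x) (abs_nonneg _) zero_le_one
      _ = M / ε := one_mul _
  have e₁ := hmu g₁ hg₁m ⟨M / ε, hg₁b⟩
  have e₂ := hpi g₂ hg₂m ⟨M / ε, hg₂b⟩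
  -- Integrability facts
  have int1 : Integrable (fun ω => if A ω = a then Y ω * g₁ (X ω) else 0) P := by
    refine bdd_integrable P ?_ (M / ε) fun ω => ?_
    · exact Measurable.ite (hA (MeasurableSet.singleton a)) (hY.mul (hg₁m.comp hX))
        measurable_const
    · by_cases hc : A ω = a <;> simp only [hc, if_true, if_false]
      · calc |Y ω * g₁ (X ω)| = |Y ω| * |g₁ (X ω)| := abs_mul _ _
          _ ≤ 1 * (M / ε) := mul_le_mul
              (abs_le.2 ⟨by linarith [(hY01 ω).1], (hY01 ω).2⟩)
              (hg₁b _) (abs_nonneg _) zero_le_one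
          _ = M / ε := one_mul _
      · simpa using hMε
  have int1' : Integrable (fun ω => if A ω = a then mu (X ω) * g₁ (X ω) else 0) P := by
    refine bdd_integrable P ?_ (M / ε) fun ω => ?_
    · exact Measurable.ite (hA (MeasurableSet.singleton a))
        ((hmum.comp hX).mul (hg₁m.comp hX)) measurable_const
    · by_cases hc : A ω = a <;> simp only [hc, if_true, if_false]
      · calc |mu (X ω) * g₁ (X ω)| = |mu (X ω)| * |g₁ (X ω)| := abs_mul _ _
          _ ≤ 1 * (M / ε) := mul_le_mul
              (abs_le.2 ⟨by linarith [(hmu01 (X ω)).1], (hmu01 (X ω)).2⟩)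
              (hg₁b _) (abs_nonneg _) zero_le_one
          _ = M / ε := one_mul _
      · simpa using hMε
  have int2 : Integrable (fun ω => if A ω = a then mub (X ω) * g₁ (X ω) else 0) P := by
    refine bdd_integrable P ?_ (M / ε) fun ω => ?_
    · exact Measurable.ite (hA (MeasurableSet.singleton a))
        ((hmubm.comp hX).mul (hg₁m.comp hX)) measurable_const
    · by_cases hc : A ω = a <;> simp only [hc, if_true, if_false]
      · calc |mub (X ω) * g₁ (X ω)| = |mub (X ω)| * |g₁ (X ω)| := abs_mul _ _
          _ ≤ 1 * (M / ε) := mul_le_mul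
              (abs_le.2 ⟨by linarith [(hmub (X ω)).1], (hmub (X ω)).2⟩)
              (hg₁b _) (abs_nonneg _) zero_le_one
          _ = M / ε := one_mul _
      · simpa using hMε
  have int3 : Integrable (fun ω => mub (X ω) * h (X ω)) P := by
    refine bdd_integrable P ((hmubm.comp hX).mul (hhm.comp hX)) M fun ω => ?_
    calc |mub (X ω) * h (X ω)| = |mub (X ω)| * |h (X ω)| := abs_mul _ _
      _ ≤ 1 * M := mul_le_mul (abs_le.2 ⟨by linarith [(hmub (X ω)).1], (hmub (X ω)).2⟩)
          (hhM _) (abs_nonneg _) zero_le_one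
      _ = M := one_mul _
  have int4 : Integrable (fun ω => mu (X ω) * h (X ω)) P := by
    refine bdd_integrable P ((hmum.comp hX).mul (hhm.comp hX)) M fun ω => ?_
    calc |mu (X ω) * h (X ω)| = |mu (X ω)| * |h (X ω)| := abs_mul _ _
      _ ≤ 1 * M := mul_le_mul (abs_le.2 ⟨by linarith [(hmu01 (X ω)).1], (hmu01 (X ω)).2⟩)
          (hhM _) (abs_nonneg _) zero_le_one
      _ = M := one_mul _
  have int5 : Integrable (fun ω => piA (X ω) * g₂ (X ω)) P := by
    refine bdd_integrable P ((hpim.comp hX).mul (hg₂m.comp hX)) (M / ε) fun ω => ?_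
    calc |piA (X ω) * g₂ (X ω)| = |piA (X ω)| * |g₂ (X ω)| := abs_mul _ _
      _ ≤ 1 * (M / ε) := mul_le_mul
          (abs_le.2 ⟨by linarith [(hpi01 (X ω)).1], (hpi01 (X ω)).2⟩)
          (hg₂b _) (abs_nonneg _) zero_le_one
      _ = M / ε := one_mul _
  -- pointwise decomposition of the integrand
  have hpt : ∀ ω, ((if A ω = a then (1 : ℝ) else 0) / pib (X ω) * (Y ω - mub (X ω)) + mub (X ω))
      * h (X ω)
      = (if A ω = a then Y ω * g₁ (X ω) else 0)
        - (if A ω = a then mub (X ω) * g₁ (X ω) else 0) + mub (X ω) * h (X ω) := by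
    intro ω
    by_cases hc : A ω = a <;> simp only [hc, if_true, if_false]
    · rw [hg₁]
      field_simp
    · simp
  have step1 : (∫ ω, ((if A ω = a then (1 : ℝ) else 0) / pib (X ω) * (Y ω - mub (X ω))
        + mub (X ω)) * h (X ω) ∂P)
      = (∫ ω, piA (X ω) * g₂ (X ω) ∂P) + ∫ ω, mub (X ω) * h (X ω) ∂P := by
    have int12 : Integrable (fun ω => (if A ω = a then Y ω * g₁ (X ω) else 0)
        - (if A ω = a then mub (X ω) * g₁ (X ω) else 0)) P := int1.sub int2
    rw [integral_congr_ae (Filter.Eventually.of_forall hpt),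
      integral_add int12 int3, integral_sub int1 int2, e₁,
      ← integral_sub int1' int2]
    congr 1
    rw [← e₂]
    refine integral_congr_ae (Filter.Eventually.of_forall fun ω => ?_)
    by_cases hc : A ω = a <;> simp only [hc, if_true, if_false]
    · simp only [hg₂]; ring
    · simp
  have key : (∫ ω, ((if A ω = a then (1 : ℝ) else 0) / pib (X ω) * (Y ω - mub (X ω))
        + mub (X ω)) * h (X ω) ∂P) - (∫ ω, mu (X ω) * h (X ω) ∂P)
      = ∫ ω, (piA (X ω) - pib (X ω)) * g₂ (X ω) ∂P := by
    have int34 : Integrable (fun ω => mub (X ω) * h (X ω) - mu (X ω) * h (X ω)) P :=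
      int3.sub int4
    rw [step1, add_sub_assoc, ← integral_sub int3 int4, ← integral_add int5 int34]
    refine integral_congr_ae (Filter.Eventually.of_forall fun ω => ?_)
    simp only [hg₂, hg₁]
    field_simp [hpibne (X ω)]
    ring
  rw [key]
  -- bound the integral
  have habs : |∫ ω, (piA (X ω) - pib (X ω)) * g₂ (X ω) ∂P|
      ≤ ∫ ω, |(piA (X ω) - pib (X ω)) * g₂ (X ω)| ∂P := by
    simpa only [Real.norm_eq_abs] using
      norm_integral_le_integral_norm (fun ω => (piA (X ω) - pib (X ω)) * g₂ (X ω)) (μ := P)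
  have intabs : Integrable (fun ω => |(piA (X ω) - pib (X ω)) * g₂ (X ω)|) P := by
    refine bdd_integrable P ?_ (2 * (M / ε)) fun ω => ?_
    · exact ((hpim.comp hX).sub (hpibm.comp hX)).mul (hg₂m.comp hX) |>.abs
    · rw [abs_abs, abs_mul]
      refine mul_le_mul ?_ (hg₂b _) (abs_nonneg _) (by norm_num)
      have h1 := hpi01 (X ω); have h2 := hpib (X ω)
      rw [abs_le]; constructor
      · linarith [h1.1, h2.2]
      · linarith [h1.2, h2.1]
  have intprod : Integrable (fun ω =>
      M / ε * (|pib (X ω) - piA (X ω)| * |mub (X ω) - mu (X ω)|)) P := by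
    refine bdd_integrable P ?_ (M / ε * (2 * 2)) fun ω => ?_
    · exact measurable_const.mul
        ((((hpibm.comp hX).sub (hpim.comp hX)).abs).mul
          (((hmubm.comp hX).sub (hmum.comp hX)).abs))
    · rw [abs_mul, abs_mul, abs_of_nonneg hMε, abs_abs, abs_abs]
      refine mul_le_mul_of_nonneg_left ?_ hMε
      have h1 := hpi01 (X ω); have h2 := hpib (X ω)
      have h3 := hmu01 (X ω); have h4 := hmub (X ω)
      have b1 : |pib (X ω) - piA (X ω)| ≤ 2 := by
        rw [abs_le]; constructor
        · linarith [h2.1, h1.2]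
        · linarith [h2.2, h1.1]
      have b2 : |mub (X ω) - mu (X ω)| ≤ 2 := by
        rw [abs_le]; constructor
        · linarith [h4.1, h3.2]
        · linarith [h4.2, h3.1]
      exact mul_le_mul b1 b2 (abs_nonneg _) (by norm_num)
  have hmono : (∫ ω, |(piA (X ω) - pib (X ω)) * g₂ (X ω)| ∂P)
      ≤ ∫ ω, M / ε * (|pib (X ω) - piA (X ω)| * |mub (X ω) - mu (X ω)|) ∂P := by
    refine integral_mono intabs intprod fun ω => ?_
    rw [abs_mul, hg₂, hg₁]
    simp only [abs_mul]
    have e : |piA (X ω) - pib (X ω)| = |pib (X ω) - piA (X ω)| := abs_sub_comm _ _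
    have e' : |mu (X ω) - mub (X ω)| = |mub (X ω) - mu (X ω)| := abs_sub_comm _ _
    rw [e, e']
    have hb : |h (X ω) / pib (X ω)| ≤ M / ε := hg₁b (X ω)
    calc |pib (X ω) - piA (X ω)| * (|mub (X ω) - mu (X ω)| * |h (X ω) / pib (X ω)|)
        ≤ |pib (X ω) - piA (X ω)| * (|mub (X ω) - mu (X ω)| * (M / ε)) := by
          refine mul_le_mul_of_nonneg_left ?_ (abs_nonneg _)
          exact mul_le_mul_of_nonneg_left hb (abs_nonneg _)
      _ = M / ε * (|pib (X ω) - piA (X ω)| * |mub (X ω) - mu (X ω)|) := by ring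
  -- Cauchy–Schwarz
  have hconj : Real.HolderConjugate 2 2 := Real.HolderConjugate.two_two
  have hmem1 : MemLp (fun ω => |pib (X ω) - piA (X ω)|) (ENNReal.ofReal 2) P := by
    refine MemLp.of_bound
      (((hpibm.comp hX).sub (hpim.comp hX)).abs).aestronglyMeasurable 2 ?_
    filter_upwards with ω
    have h1 := hpi01 (X ω); have h2 := hpib (X ω)
    rw [Real.norm_eq_abs, abs_abs, abs_le]
    constructor
    · linarith [h2.1, h1.2]
    · linarith [h2.2, h1.1]
  have hmem2 : MemLp (fun ω => |mub (X ω) - mu (X ω)|) (ENNReal.ofReal 2) P := by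
    refine MemLp.of_bound
      (((hmubm.comp hX).sub (hmum.comp hX)).abs).aestronglyMeasurable 2 ?_
    filter_upwards with ω
    have h3 := hmu01 (X ω); have h4 := hmub (X ω)
    rw [Real.norm_eq_abs, abs_abs, abs_le]
    constructor
    · linarith [h4.1, h3.2]
    · linarith [h4.2, h3.1]
  have hCS := integral_mul_le_Lp_mul_Lq_of_nonneg hconj
    (Filter.Eventually.of_forall fun ω => abs_nonneg (pib (X ω) - piA (X ω)))
    (Filter.Eventually.of_forall fun ω => abs_nonneg (mub (X ω) - mu (X ω)))
    hmem1 hmem2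
  have hsq1 : (∫ ω, |pib (X ω) - piA (X ω)| ^ (2 : ℝ) ∂P) ^ (1 / (2 : ℝ))
      = Real.sqrt (∫ ω, (pib (X ω) - piA (X ω)) ^ 2 ∂P) := by
    rw [Real.sqrt_eq_rpow]
    congr 1
    refine integral_congr_ae (Filter.Eventually.of_forall fun ω => ?_)
    show |pib (X ω) - piA (X ω)| ^ (2 : ℝ) = (pib (X ω) - piA (X ω)) ^ 2
    rw [show ((2 : ℝ)) = ((2 : ℕ) : ℝ) by norm_num, Real.rpow_natCast, sq_abs]
  have hsq2 : (∫ ω, |mub (X ω) - mu (X ω)| ^ (2 : ℝ) ∂P) ^ (1 / (2 : ℝ))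
      = Real.sqrt (∫ ω, (mub (X ω) - mu (X ω)) ^ 2 ∂P) := by
    rw [Real.sqrt_eq_rpow]
    congr 1
    refine integral_congr_ae (Filter.Eventually.of_forall fun ω => ?_)
    show |mub (X ω) - mu (X ω)| ^ (2 : ℝ) = (mub (X ω) - mu (X ω)) ^ 2
    rw [show ((2 : ℝ)) = ((2 : ℕ) : ℝ) by norm_num, Real.rpow_natCast, sq_abs]
  calc |∫ ω, (piA (X ω) - pib (X ω)) * g₂ (X ω) ∂P|
      ≤ ∫ ω, |(piA (X ω) - pib (X ω)) * g₂ (X ω)| ∂P := habs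
    _ ≤ ∫ ω, M / ε * (|pib (X ω) - piA (X ω)| * |mub (X ω) - mu (X ω)|) ∂P := hmono
    _ = M / ε * ∫ ω, |pib (X ω) - piA (X ω)| * |mub (X ω) - mu (X ω)| ∂P :=
        integral_const_mul _ _
    _ ≤ M / ε * (Real.sqrt (∫ ω, (pib (X ω) - piA (X ω)) ^ 2 ∂P)
          * Real.sqrt (∫ ω, (mub (X ω) - mu (X ω)) ^ 2 ∂P)) := by
        refine mul_le_mul_of_nonneg_left ?_ hMε
        rw [← hsq1, ← hsq2]
        exact hCS
    _ = M / ε * Real.sqrt (∫ ω, (pib (X ω) - piA (X ω)) ^ 2 ∂P)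
          * Real.sqrt (∫ ω, (mub (X ω) - mu (X ω)) ^ 2 ∂P) := by ring
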